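/- arXiv:math/0607056 — 2 statements merged into one kernel-verified Lean document; each statement's English description precedes it below -/
import Mathlib

section
/- For every z > 0, the right-hand derivative of H⁻¹ at z exists and equals 1/(G(H⁻¹(z)−) − 1), where G(x−) = sup_{u < x} G(u) denotes the left-hand limit of G at x. -/
/-!
Let `y = H⁻¹ z`. Since `G` is monotone, `1 - G` has the left limit `1 - G(y-)` at `y`, so the
fundamental theorem of calculus gives `H` the left derivative `G(y-) - 1` at `y`, which is nonzero
because `G(y-) ≤ G y < 1`. The inverse `H⁻¹` is antitone and maps `[z, ∞)` onto `(-∞, y]`, so it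
is right-continuous at `z` with values in `(-∞, y]`, and the one-sided inverse function rule applies.
-/

open MeasureTheory Filter Set Topology

theorem nhdsLE_inf_ae_le_nhdsLT (a : ℝ) : 𝓝[≤] a ⊓ ae volume ≤ 𝓝[<] a :=
  calc 𝓝[≤] a ⊓ ae volume ≤ 𝓝[≤] a ⊓ 𝓟 {a}ᶜ :=
        inf_le_inf_left _ (le_principal_iff.2 (compl_mem_ae_iff.2 (measure_singleton a)))
    _ = 𝓝[<] a := by rw [nhdsWithin, inf_assoc, inf_principal, ← sdiff_eq, Iic_sdiff_right]; rfl

theorem hasDerivWithinAt_integral_Iic_of_tendsto_nhdsLT {f : ℝ → ℝ} {a b c : ℝ}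
    (hf : IntervalIntegrable f volume a b) (hmeas : StronglyMeasurableAtFilter f (𝓝[≤] a))
    (hc : Tendsto f (𝓝[<] a) (𝓝 c)) :
    HasDerivWithinAt (fun u => ∫ x in u..b, f x) (-c) (Iic a) a :=
  intervalIntegral.integral_hasDerivWithinAt_of_tendsto_ae_left hf hmeas
    (hc.mono_left (nhdsLE_inf_ae_le_nhdsLT a))

theorem antitone_integral_Ioc_of_nonneg {f : ℝ → ℝ} {b : ℝ}
    (hf : ∀ a, IntegrableOn f (Ioc a b)) (hf0 : 0 ≤ f) :
    Antitone fun a => ∫ x in Ioc a b, f x := fun a _ h =>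
  setIntegral_mono_set (hf a) (Eventually.of_forall hf0)
    (Eventually.of_forall (Ioc_subset_Ioc_left h))

theorem HasDerivWithinAt.of_local_left_inverse {𝕜 : Type*} [NontriviallyNormedField 𝕜]
    {f g : 𝕜 → 𝕜} {f' a : 𝕜} {s t : Set 𝕜}
    (hg : Tendsto g (𝓝[s] a) (𝓝[t] (g a))) (hf : HasDerivWithinAt f f' t (g a)) (hf' : f' ≠ 0)
    (ha : a ∈ s) (hfg : ∀ᶠ y in 𝓝[s] a, f (g y) = y) : HasDerivWithinAt g f'⁻¹ s a :=
  HasFDerivWithinAt.of_local_left_inverse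
    (f' := ContinuousLinearEquiv.unitsEquivAut 𝕜 (Units.mk0 f' hf')) hg hf ha hfg

theorem Antitone.antitoneOn_of_rightInvOn {α β : Type*} [LinearOrder α] [LinearOrder β]
    {f : α → β} {g : β → α} {s : Set β} (hf : Antitone f) (hg : RightInvOn g f s) :
    AntitoneOn g s := by
  intro a ha b hb hab
  by_contra! hlt
  have hba : b ≤ a := by simpa only [hg ha, hg hb] using hf hlt.le
  exact hlt.ne (by rw [le_antisymm hab hba])

theorem AntitoneOn.tendsto_nhdsGE_nhdsLE {f : ℝ → ℝ} {a : ℝ} (hf : AntitoneOn f (Ici a))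
    (hsurj : Iic (f a) ⊆ f '' Ici a) : Tendsto f (𝓝[≥] a) (𝓝[≤] (f a)) := by
  have hcont : ContinuousWithinAt f (Ici a) a :=
    continuousWithinAt_right_of_monotoneOn_of_image_mem_nhdsWithin (β := ℝᵒᵈ) hf.dual_right
      self_mem_nhdsWithin (mem_of_superset (self_mem_nhdsWithin (s := Iic (f a))) hsurj)
  exact hcont.tendsto_nhdsWithin fun x hx => hf self_mem_Ici hx hx

theorem stmt_4_general
    (G : ℝ → ℝ) (ystar : ℝ)
    (hmono : Monotone G)
    (hG1 : ∀ y, G y ≤ 1)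
    (hstar : ∀ y, G y = 1 ↔ ystar ≤ y)
    (H : ℝ → ℝ)
    (hH : ∀ y, H y = ∫ η in Set.Ioc y ystar, (1 - G η))
    (Hinv : ℝ → ℝ)
    (hinv_right : ∀ z, 0 ≤ z → H (Hinv z) = z)
    (hinv_left : ∀ y, y ≤ ystar → Hinv (H y) = y) :
    ∀ z : ℝ, 0 < z →
      HasDerivWithinAt Hinv (1 / (sSup (G '' Set.Iio (Hinv z)) - 1)) (Set.Ici z) z := by
  intro z hz
  set y := Hinv z
  set L := sSup (G '' Iio y)
  have hφ : Antitone fun η => 1 - G η := fun _ _ h => sub_le_sub_left (hmono h) 1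
  have hH_anti : Antitone H := by
    simpa only [← funext hH] using
      antitone_integral_Ioc_of_nonneg (fun _ => (hφ.intervalIntegrable (b := ystar)).1)
        fun η => sub_nonneg.2 (hG1 η)
  have hright : RightInvOn Hinv H (Ici z) := fun z' hz' => hinv_right z' (hz.le.trans hz')
  have hy : y < ystar := by
    by_contra! h
    have : H y = 0 := by
      rw [hH, Ioc_eq_empty h.not_gt, Measure.restrict_empty, integral_zero_measure]
    linarith [hright self_mem_Ici]
  have hL : L < 1 :=
    (csSup_le (nonempty_Iio.image G) (forall_mem_image.2 fun u hu => hmono hu.le)).trans_lt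
      ((hG1 y).lt_of_ne fun h => hy.not_ge ((hstar y).1 h))
  have hderiv : HasDerivWithinAt H (L - 1) (Iic y) y := by
    have := hasDerivWithinAt_integral_Iic_of_tendsto_nhdsLT (b := ystar) hφ.intervalIntegrable
      hφ.measurable.stronglyMeasurable.stronglyMeasurableAtFilter
      (tendsto_const_nhds.sub (hmono.tendsto_nhdsLT y))
    rw [neg_sub] at this
    refine this.congr_of_mem (fun x hx => ?_) self_mem_Iic
    rw [hH, intervalIntegral.integral_of_le (hx.trans hy.le)]
  have hsurj : Iic y ⊆ Hinv '' Ici z := fun w hw =>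
    ⟨H w, hright self_mem_Ici ▸ hH_anti hw, hinv_left w (hw.trans hy.le)⟩
  have hinv_tendsto : Tendsto Hinv (𝓝[≥] z) (𝓝[≤] y) :=
    (hH_anti.antitoneOn_of_rightInvOn hright).tendsto_nhdsGE_nhdsLE hsurj
  simpa only [one_div] using hderiv.of_local_left_inverse hinv_tendsto (sub_ne_zero.2 hL.ne)
    self_mem_Ici (eventually_nhdsWithin_of_forall hright)

/-- for every `z > 0` the right-hand derivative of `H⁻¹` at `z` exists and
equals `1 / (G(H⁻¹(z)-) - 1)`, where `G(x-) = sup_{u < x} G u` is the left limit of `G`. -/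
theorem stmt_4
    (G : ℝ → ℝ) (ystar : ℝ)
    (hmono : Monotone G)
    (hrc : ∀ y, ContinuousWithinAt G (Set.Ici y) y)
    (hG0 : ∀ y, 0 ≤ G y) (hG1 : ∀ y, G y ≤ 1)
    (hstar : ∀ y, G y = 1 ↔ ystar ≤ y)
    (H : ℝ → ℝ)
    (hH : ∀ y, H y = ∫ η in Set.Ioc y ystar, (1 - G η))
    (Hinv : ℝ → ℝ)
    (hinv_mem : ∀ z, 0 ≤ z → Hinv z ≤ ystar)
    (hinv_right : ∀ z, 0 ≤ z → H (Hinv z) = z)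
    (hinv_left : ∀ y, y ≤ ystar → Hinv (H y) = y) :
    ∀ z : ℝ, 0 < z →
      HasDerivWithinAt Hinv (1 / (sSup (G '' Set.Iio (Hinv z)) - 1)) (Set.Ici z) z :=
  stmt_4_general G ystar hmono hG1 hstar H hH Hinv hinv_right hinv_left
end

section
/- For all real numbers c > 0, θ > 0 and all x ∈ ℝ, ∫_0^∞ (2π c y)^{−1/2} · exp(−x²/(2cy)) · θ·exp(−θ y) dy = √(θ/(2c)) · exp(−|x|·√(2θ/c)). In other words, the mixture of centered normal densities with variance c·y against the exponential density with rate θ is the Laplace density with parameter √(2θ/c). -/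
/-!
Substituting `y = u²` turns the integrand into a constant multiple of
`exp (-(p u - q / u)²)` with `p = √θ`, `q = |x| / √(2c)`, the constant carrying the factor
`exp (-2pq) = exp (-|x| √(2θ/c))` that comes from completing the square. The remaining integral
is `√π / (2p)` by the Cauchy–Schlömilch substitution `v = p u - q / u`, a bijection of `(0, ∞)`
onto `ℝ` with `dv = (p + q / u²) du`: the inversion `u ↦ q / (p u)` shows that the two parts of
`dv` contribute equally, and the whole is the Gaussian integral `√π`.
-/

open MeasureTheory Set Real

section ChangeOfVariables

variable {E : Type*} [NormedAddCommGroup E] [NormedSpace ℝ E]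

theorem integral_Ioi_comp_sq (g : ℝ → E) :
    ∫ u in Ioi 0, (2 * u) • g (u ^ 2) = ∫ y in Ioi 0, g y := by
  rw [← integral_comp_rpow_Ioi_of_pos (g := g) two_pos]
  refine setIntegral_congr_fun measurableSet_Ioi fun u _ ↦ ?_
  rw [show (2 : ℝ) - 1 = 1 by norm_num, rpow_one, rpow_two]

theorem integral_Ioi_comp_div (g : ℝ → E) {r : ℝ} (hr : 0 < r) :
    ∫ u in Ioi 0, (r / u ^ 2) • g (r / u) = ∫ u in Ioi 0, g u := by
  have himage : (r / ·) '' Ioi (0 : ℝ) = Ioi 0 :=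
    (image_subset_iff.2 fun u hu ↦ div_pos hr hu).antisymm fun v hv ↦
      ⟨r / v, div_pos hr hv, div_div_cancel₀ hr.ne'⟩
  have hderiv : ∀ u ∈ Ioi (0 : ℝ), HasDerivWithinAt (r / ·) (-(r / u ^ 2)) (Ioi 0) u :=
    fun u hu ↦ by
      simpa [div_eq_mul_inv] using ((hasDerivAt_inv (ne_of_gt hu)).const_mul r).hasDerivWithinAt
  have hinj : InjOn (r / ·) (Ioi (0 : ℝ)) := fun u _ v _ h ↦ by
    simpa [div_eq_mul_inv, hr.ne'] using h
  conv_rhs => rw [← himage, integral_image_eq_integral_abs_deriv_smul measurableSet_Ioi hderiv hinj]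
  refine setIntegral_congr_fun measurableSet_Ioi fun u hu ↦ ?_
  rw [abs_neg, abs_of_pos (div_pos hr (pow_pos hu 2))]

variable {p q : ℝ}

theorem image_Ioi_mul_sub_div (hp : 0 < p) (hq : 0 < q) :
    (fun u ↦ p * u - q / u) '' Ioi 0 = univ := by
  refine eq_univ_of_forall fun v ↦ ?_
  set s := √(v ^ 2 + 4 * p * q)
  have hs : s ^ 2 = v ^ 2 + 4 * p * q := sq_sqrt (by positivity)
  have hvs : v ^ 2 < s ^ 2 := by rw [hs]; nlinarith [mul_pos hp hq]
  have hpos : 0 < v + s := by linarith [(abs_lt_of_sq_lt_sq' hvs (sqrt_nonneg _)).1]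
  refine ⟨(v + s) / (2 * p), div_pos hpos (by positivity), ?_⟩
  field_simp
  linear_combination hs

theorem hasDerivAt_mul_sub_div {u : ℝ} (hu : u ≠ 0) :
    HasDerivAt (fun u ↦ p * u - q / u) (p + q / u ^ 2) u := by
  have h := ((hasDerivAt_id' u).const_mul p).fun_sub ((hasDerivAt_inv hu).const_mul q)
  simp only [← div_eq_mul_inv] at h
  exact h.congr_deriv (by ring)

theorem strictMonoOn_mul_sub_div (hp : 0 < p) (hq : 0 < q) :
    StrictMonoOn (fun u ↦ p * u - q / u) (Ioi 0) := fun u hu v _ huv ↦ by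
  have := div_lt_div_of_pos_left hq hu huv
  simp only
  nlinarith

theorem integral_Ioi_comp_mul_sub_div (g : ℝ → E) (hp : 0 < p) (hq : 0 < q) :
    ∫ u in Ioi 0, (p + q / u ^ 2) • g (p * u - q / u) = ∫ v, g v := by
  conv_rhs => rw [← setIntegral_univ, ← image_Ioi_mul_sub_div hp hq,
    integral_image_eq_integral_abs_deriv_smul measurableSet_Ioi
      (fun u hu ↦ (hasDerivAt_mul_sub_div (ne_of_gt hu)).hasDerivWithinAt)
      (strictMonoOn_mul_sub_div hp hq).injOn]
  refine setIntegral_congr_fun measurableSet_Ioi fun u hu ↦ ?_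
  rw [abs_of_pos (by have : 0 < u := hu; positivity)]

theorem integrableOn_Ioi_comp_mul_sub_div {g : ℝ → E} (hg : Integrable g) (hp : 0 < p)
    (hq : 0 < q) : IntegrableOn (fun u ↦ (p + q / u ^ 2) • g (p * u - q / u)) (Ioi 0) := by
  rw [← integrableOn_univ, ← image_Ioi_mul_sub_div hp hq,
    integrableOn_image_iff_integrableOn_abs_deriv_smul measurableSet_Ioi
      (fun u hu ↦ (hasDerivAt_mul_sub_div (ne_of_gt hu)).hasDerivWithinAt)
      (strictMonoOn_mul_sub_div hp hq).injOn] at hg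
  refine hg.congr_fun (fun u hu ↦ ?_) measurableSet_Ioi
  dsimp only
  rw [abs_of_pos (by have : 0 < u := hu; positivity)]

end ChangeOfVariables

theorem integral_Ioi_exp_neg_sq_mul_sub_div {p q : ℝ} (hp : 0 < p) (hq : 0 ≤ q) :
    ∫ u in Ioi 0, exp (-(p * u - q / u) ^ 2) = √π / (2 * p) := by
  rcases hq.eq_or_lt with rfl | hq
  · simp_rw [zero_div, sub_zero, mul_pow, ← neg_mul]
    rw [integral_gaussian_Ioi, sqrt_div' _ (sq_nonneg p), sqrt_sq hp.le, div_div, mul_comm]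
  set e := fun u ↦ exp (-(p * u - q / u) ^ 2)
  have hsum : ∫ u in Ioi 0, (p + q / u ^ 2) * e u = √π := by
    simpa using (integral_Ioi_comp_mul_sub_div _ hp hq).trans (integral_gaussian 1)
  -- `e` is invariant under `u ↦ q / (p u)`
  have hflip : ∫ u in Ioi 0, q / u ^ 2 * e u = p * ∫ u in Ioi 0, e u := by
    rw [← integral_Ioi_comp_div e (div_pos hq hp), ← integral_const_mul]
    refine setIntegral_congr_fun measurableSet_Ioi fun u hu ↦ ?_
    have : u ≠ 0 := ne_of_gt hu
    simp only [e, smul_eq_mul]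
    field_simp
    ring_nf
  have hsum_integrable : IntegrableOn (fun u ↦ (p + q / u ^ 2) • exp (-(p * u - q / u) ^ 2))
      (Ioi 0) :=
    integrableOn_Ioi_comp_mul_sub_div (by simpa using integrable_exp_neg_mul_sq one_pos) hp hq
  have he_integrable : IntegrableOn e (Ioi 0) := by
    refine (hsum_integrable.div_const p).mono' (by fun_prop)
      (ae_restrict_of_forall_mem measurableSet_Ioi fun u hu ↦ ?_)
    have hu : 0 ≤ q / u ^ 2 := by positivity
    have he : 0 < e u := exp_pos _
    rw [norm_of_nonneg he.le, smul_eq_mul, le_div_iff₀ hp]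
    nlinarith
  have hweighted_integrable : IntegrableOn (fun u ↦ q / u ^ 2 * e u) (Ioi 0) := by
    refine hsum_integrable.mono' (by fun_prop)
      (ae_restrict_of_forall_mem measurableSet_Ioi fun u hu ↦ ?_)
    have hu : 0 ≤ q / u ^ 2 := by positivity
    have he : 0 < e u := exp_pos _
    rw [norm_of_nonneg (by positivity), smul_eq_mul]
    nlinarith
  simp_rw [add_mul] at hsum
  rw [integral_add (he_integrable.const_mul p) hweighted_integrable, integral_const_mul, hflip] at hsum
  field_simp
  linarith

theorem two_mul_smul_mixture_integrand_sq {c θ x u : ℝ} (hc : 0 < c) (hθ : 0 < θ)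
    (hu : 0 < u) :
    (2 * u) • ((2 * π * c * u ^ 2) ^ (-(1 : ℝ) / 2) * exp (-(x ^ 2) / (2 * c * u ^ 2)) *
      (θ * exp (-(θ * u ^ 2)))) =
      2 * θ / (√π * √(2 * c)) * exp (-(|x| * √(2 * θ / c))) *
        exp (-(√θ * u - |x| / √(2 * c) / u) ^ 2) := by
  set p := √θ
  set s := √(2 * c)
  set q := |x| / s
  have hs : 0 < s := sqrt_pos.2 (by positivity)
  have hθp : θ = p ^ 2 := (sq_sqrt hθ.le).symm
  have hcs : 2 * c = s ^ 2 := (sq_sqrt (by positivity)).symm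
  have hxq : x ^ 2 = (q * s) ^ 2 := by rw [div_mul_cancel₀ _ hs.ne', sq_abs]
  have hroot : (2 * π * c * u ^ 2) ^ (-(1 : ℝ) / 2) = (√π * s * u)⁻¹ := by
    have hsq : 2 * π * c * u ^ 2 = (√π * s * u) ^ 2 := by
      rw [mul_pow, mul_pow, sq_sqrt pi_pos.le, ← hcs]; ring
    rw [hsq, neg_div, rpow_neg (sq_nonneg _), ← sqrt_eq_rpow, sqrt_sq (by positivity)]
  have hexponent : |x| * √(2 * θ / c) = 2 * p * q := by
    rw [show 2 * θ / c = (2 * p / s) ^ 2 by rw [div_pow, ← hcs, mul_pow, ← hθp]; field_simp,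
      sqrt_sq (by positivity)]
    ring
  have hcomplete_sq : exp (-(q * s) ^ 2 / (s ^ 2 * u ^ 2)) * exp (-(p ^ 2 * u ^ 2)) =
      exp (-(2 * p * q)) * exp (-(p * u - q / u) ^ 2) := by
    rw [← exp_add, ← exp_add]
    congr 1
    field_simp
    ring
  rw [hroot, hexponent, smul_eq_mul, hxq, hcs, mul_assoc (2 * θ / (√π * s)), ← hcomplete_sq, hθp]
  field_simp

/-- mixing centered normal densities of variance `c·y` against an
exponential density with rate `θ` yields the Laplace density with parameter `√(2θ/c)`. -/
theorem stmt_13 (c θ x : ℝ) (hc : 0 < c) (hθ : 0 < θ) :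
    (∫ y in Set.Ioi (0 : ℝ),
        (2 * Real.pi * c * y) ^ (-(1 : ℝ) / 2) * Real.exp (-(x ^ 2) / (2 * c * y)) *
          (θ * Real.exp (-(θ * y)))) =
      Real.sqrt (θ / (2 * c)) * Real.exp (-(|x| * Real.sqrt (2 * θ / c))) := by
  have hp : 0 < √θ := sqrt_pos.2 hθ
  rw [← integral_Ioi_comp_sq, setIntegral_congr_fun measurableSet_Ioi
      fun u hu ↦ two_mul_smul_mixture_integrand_sq hc hθ hu, integral_const_mul,
    integral_Ioi_exp_neg_sq_mul_sub_div hp (by positivity), sqrt_div' θ (by positivity)]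
  have hθ_sq : √θ ^ 2 = θ := sq_sqrt hθ.le
  field_simp
  linear_combination -hθ_sq
end
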